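/- Let G be the 2D wedge with opening angle θ₀ ∈ (0,π), with boundary pieces Γ₁ = (-∞,0)·τ₁ and Γ₂ = (0,∞)·τ₂ where τ₁ = -e₁ and τ₂ = (cos θ₀, sin θ₀). The map Φ: G → (0,∞)², Φ(x) = (ρ cos(π/(2θ₀) · arccos(x₁/ρ)), ρ sin(π/(2θ₀) · arccos(x₁/ρ))) with ρ = |x|, is a C^∞-diffeomorphism from G onto the quarter plane (0,∞)² with det ∇Φ ≡ π/(2θ₀); moreover the first derivatives of Φ are bounded on G and ρ|∂_j∂_k Φ_n| is bounded on G for all j,k,n ∈ {1,2}. -/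

import Mathlib

open Real Set

noncomputable section

/-- The 2D wedge domain with opening angle `θ₀`. -/
def Wedge (θ₀ : ℝ) : Set (ℝ × ℝ) :=
  {z | ∃ r θ : ℝ, 0 < r ∧ 0 < θ ∧ θ < θ₀ ∧ z = (r * Real.cos θ, r * Real.sin θ)}

/-- `ρ(x) = |x|`. -/
def rho (z : ℝ × ℝ) : ℝ := Real.sqrt (z.1 ^ 2 + z.2 ^ 2)

/-- The angle-rescaling map `Φ` from the wedge of angle `θ₀` onto the quarter plane:
`Φ(x) = (ρ cos(π/(2θ₀)·arccos(x₁/ρ)), ρ sin(π/(2θ₀)·arccos(x₁/ρ)))`. -/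
def PhiMap (θ₀ : ℝ) (z : ℝ × ℝ) : ℝ × ℝ :=
  (rho z * Real.cos (π / (2 * θ₀) * Real.arccos (z.1 / rho z)),
   rho z * Real.sin (π / (2 * θ₀) * Real.arccos (z.1 / rho z)))

/-- Partial derivative of a scalar function in direction `v`. -/
def pdv (f : ℝ × ℝ → ℝ) (v z : ℝ × ℝ) : ℝ := fderiv ℝ f z v

namespace WedgeAux

def lin (a b : ℝ) : ℝ × ℝ →L[ℝ] ℝ :=
  a • (ContinuousLinearMap.fst ℝ ℝ ℝ) + b • (ContinuousLinearMap.snd ℝ ℝ ℝ)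

@[simp] lemma lin_apply (a b : ℝ) (v : ℝ × ℝ) : lin a b v = a * v.1 + b * v.2 := by
  simp [lin]

def A (z : ℝ × ℝ) : ℝ := Real.arccos (z.1 / rho z)

variable {z : ℝ × ℝ}

lemma s_pos (h : 0 < z.2) : 0 < z.1 ^ 2 + z.2 ^ 2 := by positivity

lemma rho_pos (h : 0 < z.2) : 0 < rho z := Real.sqrt_pos.2 (s_pos h)

lemma rho_sq (h : 0 < z.2) : rho z ^ 2 = z.1 ^ 2 + z.2 ^ 2 := Real.sq_sqrt (s_pos h).le

lemma abs_fst_lt (h : 0 < z.2) : |z.1| < rho z := by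
  rw [← Real.sqrt_sq_eq_abs]
  exact Real.sqrt_lt_sqrt (sq_nonneg _) (by nlinarith)

lemma abs_snd_le (h : 0 < z.2) : |z.2| ≤ rho z := by
  rw [← Real.sqrt_sq_eq_abs]
  exact Real.sqrt_le_sqrt (by nlinarith)

lemma ratio_lt_one (h : 0 < z.2) : z.1 / rho z < 1 := by
  rw [div_lt_one (rho_pos h)]
  exact lt_of_le_of_lt (le_abs_self _) (abs_fst_lt h)

lemma neg_one_lt_ratio (h : 0 < z.2) : -1 < z.1 / rho z := by
  rw [lt_div_iff₀ (rho_pos h)]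
  have := (abs_lt.1 (abs_fst_lt h)).1
  linarith

lemma cos_A (h : 0 < z.2) : Real.cos (A z) = z.1 / rho z :=
  Real.cos_arccos (neg_one_lt_ratio h).le (ratio_lt_one h).le

lemma one_sub_ratio_sq (h : 0 < z.2) : 1 - (z.1 / rho z) ^ 2 = (z.2 / rho z) ^ 2 := by
  have hr := rho_pos h
  field_simp
  rw [rho_sq h]; ring

lemma sin_A (h : 0 < z.2) : Real.sin (A z) = z.2 / rho z := by
  rw [A, Real.sin_arccos, one_sub_ratio_sq h,
    Real.sqrt_sq (div_nonneg h.le (rho_pos h).le)]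

lemma A_pos (h : 0 < z.2) : 0 < A z := Real.arccos_pos.2 (ratio_lt_one h)

lemma A_lt_pi (h : 0 < z.2) : A z < π := by
  rw [A, Real.arccos]
  have := Real.neg_pi_div_two_lt_arcsin.2 (neg_one_lt_ratio h)
  linarith

lemma hasFDerivAt_rho (h : 0 < z.2) :
    HasFDerivAt rho (lin (z.1 / rho z) (z.2 / rho z)) z := by
  have hs : HasFDerivAt (fun w : ℝ × ℝ => w.1 ^ 2 + w.2 ^ 2)
      (lin (2 * z.1) (2 * z.2)) z := by
    simp only [pow_two]
    refine ((hasFDerivAt_fst.mul hasFDerivAt_fst).add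
      (hasFDerivAt_snd.mul hasFDerivAt_snd)).congr_fderiv ?_
    refine ContinuousLinearMap.ext fun v => ?_
    simp [lin]
    ring
  have hsqrt := Real.hasDerivAt_sqrt (ne_of_gt (s_pos h))
  have hcomp := hsqrt.comp_hasFDerivAt z hs
  refine hcomp.congr_fderiv ?_
  refine ContinuousLinearMap.ext fun v => ?_
  have hr := rho_pos h
  have hr' : Real.sqrt (z.1 ^ 2 + z.2 ^ 2) = rho z := rfl
  rw [ContinuousLinearMap.smul_apply, lin_apply, lin_apply, hr', smul_eq_mul]
  field_simp

lemma hasFDerivAt_A (h : 0 < z.2) :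
    HasFDerivAt A (lin (-z.2 / (z.1 ^ 2 + z.2 ^ 2)) (z.1 / (z.1 ^ 2 + z.2 ^ 2))) z := by
  have hr := rho_pos h
  have hinv : HasDerivAt (fun x : ℝ => x⁻¹) (-((rho z ^ 2)⁻¹)) (rho z) := hasDerivAt_inv hr.ne'
  have h2 := hinv.comp_hasFDerivAt z (hasFDerivAt_rho h)
  have h3 := (hasFDerivAt_fst (𝕜 := ℝ) (p := z)).mul h2
  have hratio : HasFDerivAt (fun w : ℝ × ℝ => w.1 / rho w)
      (lin (z.2 ^ 2 / rho z ^ 3) (-(z.1 * z.2) / rho z ^ 3)) z := by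
    simp only [div_eq_mul_inv]
    refine h3.congr_fderiv ?_
    have hq := rho_sq h
    ext
    · simp [lin, Function.comp]
      field_simp
      linear_combination hq
    · simp [lin, Function.comp]
      field_simp
  have harc := Real.hasDerivAt_arccos (ne_of_gt (neg_one_lt_ratio h)) (ne_of_lt (ratio_lt_one h))
  have hcomp := harc.comp_hasFDerivAt z hratio
  refine hcomp.congr_fderiv ?_
  have hq := rho_sq h
  have h2' := h.ne'
  ext
  · simp only [ContinuousLinearMap.coe_comp', Function.comp_apply, ContinuousLinearMap.inl_apply,
      ContinuousLinearMap.smul_apply, lin_apply, smul_eq_mul]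
    rw [one_sub_ratio_sq h, Real.sqrt_sq (div_nonneg h.le hr.le)]
    field_simp
    linear_combination z.2 * hq
  · simp only [ContinuousLinearMap.coe_comp', Function.comp_apply, ContinuousLinearMap.inr_apply,
      ContinuousLinearMap.smul_apply, lin_apply, smul_eq_mul]
    rw [one_sub_ratio_sq h, Real.sqrt_sq (div_nonneg h.le hr.le)]
    field_simp
    linear_combination (-z.1) * hq

-- continuation fragment, tested together with a.lean content
section Trig
variable {z : ℝ × ℝ}

lemma hasDerivAt_lin1 (c t : ℝ) : HasDerivAt (fun x : ℝ => c * x) c t := by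
  simpa using (hasDerivAt_id t).const_mul c

lemma hasDerivAt_f1 (c t : ℝ) :
    HasDerivAt (fun t => Real.cos t * Real.cos (c*t) + c * (Real.sin t * Real.sin (c*t)))
      ((c^2 - 1) * (Real.sin t * Real.cos (c*t))) t := by
  have hcos := (Real.hasDerivAt_cos (c*t)).comp t (hasDerivAt_lin1 c t)
  have hsin := (Real.hasDerivAt_sin (c*t)).comp t (hasDerivAt_lin1 c t)
  have h := ((Real.hasDerivAt_cos t).mul hcos).add
    (((Real.hasDerivAt_sin t).mul hsin).const_mul c)
  refine h.congr_deriv ?_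
  simp only [Function.comp_apply]
  ring

lemma hasDerivAt_f2 (c t : ℝ) :
    HasDerivAt (fun t => Real.sin t * Real.cos (c*t) - c * (Real.cos t * Real.sin (c*t)))
      ((1 - c^2) * (Real.cos t * Real.cos (c*t))) t := by
  have hcos := (Real.hasDerivAt_cos (c*t)).comp t (hasDerivAt_lin1 c t)
  have hsin := (Real.hasDerivAt_sin (c*t)).comp t (hasDerivAt_lin1 c t)
  have h := ((Real.hasDerivAt_sin t).mul hcos).sub
    (((Real.hasDerivAt_cos t).mul hsin).const_mul c)
  refine h.congr_deriv ?_
  simp only [Function.comp_apply]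
  ring

lemma hasDerivAt_f3 (c t : ℝ) :
    HasDerivAt (fun t => Real.cos t * Real.sin (c*t) - c * (Real.sin t * Real.cos (c*t)))
      ((c^2 - 1) * (Real.sin t * Real.sin (c*t))) t := by
  have hcos := (Real.hasDerivAt_cos (c*t)).comp t (hasDerivAt_lin1 c t)
  have hsin := (Real.hasDerivAt_sin (c*t)).comp t (hasDerivAt_lin1 c t)
  have h := ((Real.hasDerivAt_cos t).mul hsin).sub
    (((Real.hasDerivAt_sin t).mul hcos).const_mul c)
  refine h.congr_deriv ?_
  simp only [Function.comp_apply]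
  ring

lemma hasDerivAt_f4 (c t : ℝ) :
    HasDerivAt (fun t => Real.sin t * Real.sin (c*t) + c * (Real.cos t * Real.cos (c*t)))
      ((1 - c^2) * (Real.cos t * Real.sin (c*t))) t := by
  have hcos := (Real.hasDerivAt_cos (c*t)).comp t (hasDerivAt_lin1 c t)
  have hsin := (Real.hasDerivAt_sin (c*t)).comp t (hasDerivAt_lin1 c t)
  have h := ((Real.hasDerivAt_sin t).mul hsin).add
    (((Real.hasDerivAt_cos t).mul hcos).const_mul c)
  refine h.congr_deriv ?_
  simp only [Function.comp_apply]
  ring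

lemma hasFDerivAt_Phi1 (c : ℝ) (h : 0 < z.2) :
    HasFDerivAt (fun w => rho w * Real.cos (c * A w))
      (lin (Real.cos (A z) * Real.cos (c * A z) + c * (Real.sin (A z) * Real.sin (c * A z)))
           (Real.sin (A z) * Real.cos (c * A z) - c * (Real.cos (A z) * Real.sin (c * A z)))) z := by
  have hr := rho_pos h
  have hq := rho_sq h
  have hcA : HasFDerivAt (fun w => c * A w)
      (c • lin (-z.2 / (z.1 ^ 2 + z.2 ^ 2)) (z.1 / (z.1 ^ 2 + z.2 ^ 2))) z :=
    (hasFDerivAt_A h).const_mul c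
  have hcos := (Real.hasDerivAt_cos (c * A z)).comp_hasFDerivAt z hcA
  have hmul := (hasFDerivAt_rho h).mul hcos
  refine hmul.congr_fderiv ?_
  ext
  · simp only [ContinuousLinearMap.coe_comp', Function.comp_apply, ContinuousLinearMap.inl_apply,
      ContinuousLinearMap.add_apply, ContinuousLinearMap.smul_apply, lin_apply, smul_eq_mul]
    rw [cos_A h, sin_A h]
    field_simp
    linear_combination (Real.sin (c * A z) * c * z.2) * hq
  · simp only [ContinuousLinearMap.coe_comp', Function.comp_apply, ContinuousLinearMap.inr_apply,
      ContinuousLinearMap.add_apply, ContinuousLinearMap.smul_apply, lin_apply, smul_eq_mul]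
    rw [cos_A h, sin_A h]
    field_simp
    linear_combination (-(Real.sin (c * A z) * c * z.1)) * hq

lemma hasFDerivAt_Phi2 (c : ℝ) (h : 0 < z.2) :
    HasFDerivAt (fun w => rho w * Real.sin (c * A w))
      (lin (Real.cos (A z) * Real.sin (c * A z) - c * (Real.sin (A z) * Real.cos (c * A z)))
           (Real.sin (A z) * Real.sin (c * A z) + c * (Real.cos (A z) * Real.cos (c * A z)))) z := by
  have hr := rho_pos h
  have hq := rho_sq h
  have hcA : HasFDerivAt (fun w => c * A w)
      (c • lin (-z.2 / (z.1 ^ 2 + z.2 ^ 2)) (z.1 / (z.1 ^ 2 + z.2 ^ 2))) z :=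
    (hasFDerivAt_A h).const_mul c
  have hsin := (Real.hasDerivAt_sin (c * A z)).comp_hasFDerivAt z hcA
  have hmul := (hasFDerivAt_rho h).mul hsin
  refine hmul.congr_fderiv ?_
  ext
  · simp only [ContinuousLinearMap.coe_comp', Function.comp_apply, ContinuousLinearMap.inl_apply,
      ContinuousLinearMap.add_apply, ContinuousLinearMap.smul_apply, lin_apply, smul_eq_mul]
    rw [cos_A h, sin_A h]
    field_simp
    linear_combination (-(Real.cos (c * A z) * c * z.2)) * hq
  · simp only [ContinuousLinearMap.coe_comp', Function.comp_apply, ContinuousLinearMap.inr_apply,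
      ContinuousLinearMap.add_apply, ContinuousLinearMap.smul_apply, lin_apply, smul_eq_mul]
    rw [cos_A h, sin_A h]
    field_simp
    linear_combination (Real.cos (c * A z) * c * z.1) * hq

end Trig

section Maps
variable {z : ℝ × ℝ}

lemma phi_polar (a r θ : ℝ) (hr : 0 < r) (h0 : 0 ≤ θ) (hπ : θ ≤ π) :
    PhiMap a (r * Real.cos θ, r * Real.sin θ)
      = (r * Real.cos (π / (2*a) * θ), r * Real.sin (π / (2*a) * θ)) := by
  have h1 : rho (r * Real.cos θ, r * Real.sin θ) = r := by
    rw [rho]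
    have h2 : ((r * Real.cos θ, r * Real.sin θ) : ℝ × ℝ).1 ^ 2
        + ((r * Real.cos θ, r * Real.sin θ) : ℝ × ℝ).2 ^ 2 = r ^ 2 := by
      simp only
      linear_combination r ^ 2 * Real.sin_sq_add_cos_sq θ
    rw [h2, Real.sqrt_sq hr.le]
  have h2 : Real.arccos (((r * Real.cos θ, r * Real.sin θ) : ℝ × ℝ).1 / r) = θ := by
    simp only
    rw [mul_comm, mul_div_assoc, div_self hr.ne', mul_one, Real.arccos_cos h0 hπ]
  simp only [PhiMap, h1, h2]

lemma polar_of_quarter {w : ℝ × ℝ} (h1 : 0 < w.1) (h2 : 0 < w.2) :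
    w = (rho w * Real.cos (A w), rho w * Real.sin (A w)) ∧ 0 < A w ∧ A w < π/2 := by
  have hr := rho_pos h2
  refine ⟨?_, A_pos h2, Real.arccos_lt_pi_div_two.2 (div_pos h1 hr)⟩
  rw [cos_A h2, sin_A h2]
  have e1 : rho w * (w.1 / rho w) = w.1 := by field_simp
  have e2 : rho w * (w.2 / rho w) = w.2 := by field_simp
  rw [e1, e2]

lemma contDiffOn_phi (a : ℝ) : ContDiffOn ℝ (⊤ : ℕ∞) (PhiMap a) {z : ℝ × ℝ | 0 < z.2} := by
  intro z hz
  have h : (0:ℝ) < z.2 := hz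
  have hr := rho_pos h
  have hρ : ContDiffAt ℝ (⊤ : ℕ∞) rho z := by
    have h1 : ContDiffAt ℝ (⊤ : ℕ∞) (fun w : ℝ × ℝ => w.1 ^ 2 + w.2 ^ 2) z :=
      (contDiffAt_fst.pow 2).add (contDiffAt_snd.pow 2)
    exact (Real.contDiffAt_sqrt (s_pos h).ne').comp z h1
  have hratio : ContDiffAt ℝ (⊤ : ℕ∞) (fun w : ℝ × ℝ => w.1 / rho w) z :=
    contDiffAt_fst.div hρ hr.ne'
  have hA : ContDiffAt ℝ (⊤ : ℕ∞) A z :=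
    (Real.contDiffAt_arccos (ne_of_gt (neg_one_lt_ratio h))
      (ne_of_lt (ratio_lt_one h))).comp z hratio
  have hcA : ContDiffAt ℝ (⊤ : ℕ∞) (fun w => π / (2*a) * A w) z := contDiffAt_const.mul hA
  have h1 : ContDiffAt ℝ (⊤ : ℕ∞) (fun w => rho w * Real.cos (π / (2*a) * A w)) z :=
    hρ.mul (Real.contDiff_cos.contDiffAt.comp z hcA)
  have h2 : ContDiffAt ℝ (⊤ : ℕ∞) (fun w => rho w * Real.sin (π / (2*a) * A w)) z :=
    hρ.mul (Real.contDiff_sin.contDiffAt.comp z hcA)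
  exact (h1.prodMk h2).contDiffWithinAt

lemma abs_comb1 (e a b d f : ℝ) (ha : |a| ≤ 1) (hb : |b| ≤ 1) (hd : |d| ≤ 1) (hf : |f| ≤ 1) :
    |a * b + e * (d * f)| ≤ 1 + |e| := by
  have h1 : |a * b| ≤ 1 := by rw [abs_mul]; nlinarith [abs_nonneg a, abs_nonneg b]
  have h2 : |e * (d * f)| ≤ |e| := by
    rw [abs_mul, abs_mul]
    have hq : |d| * |f| ≤ 1 := by nlinarith [abs_nonneg d, abs_nonneg f]
    nlinarith [mul_le_mul_of_nonneg_left hq (abs_nonneg e)]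
  calc |a * b + e * (d * f)| ≤ |a * b| + |e * (d * f)| := abs_add_le _ _
    _ ≤ 1 + |e| := add_le_add h1 h2

lemma abs_comb2 (e a b d f : ℝ) (ha : |a| ≤ 1) (hb : |b| ≤ 1) (hd : |d| ≤ 1) (hf : |f| ≤ 1) :
    |a * b - e * (d * f)| ≤ 1 + |e| := by
  have := abs_comb1 (-e) a b d f ha hb hd hf
  rw [abs_neg] at this
  calc |a * b - e * (d * f)| = |a * b + (-e) * (d * f)| := by ring_nf
    _ ≤ 1 + |e| := this

lemma one_add_le_sq (e : ℝ) : 1 + |e| ≤ (1 + |e|)^2 := by nlinarith [abs_nonneg e]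

lemma df_bound (e x y : ℝ) (hx : |x| ≤ 1) (hy : |y| ≤ 1) :
    |(e^2 - 1) * (x * y)| ≤ (1 + |e|)^2 := by
  have h1 : |x * y| ≤ 1 := by rw [abs_mul]; nlinarith [abs_nonneg x, abs_nonneg y]
  have h2 : |e^2 - 1| ≤ (1 + |e|)^2 := by
    rw [abs_le]
    constructor <;> nlinarith [sq_abs e, abs_nonneg e]
  rw [abs_mul]
  nlinarith [mul_le_mul_of_nonneg_left h1 (abs_nonneg (e^2-1)), abs_nonneg (e^2 - 1), abs_nonneg (x*y)]

lemma df_bound' (e x y : ℝ) (hx : |x| ≤ 1) (hy : |y| ≤ 1) :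
    |(1 - e^2) * (x * y)| ≤ (1 + |e|)^2 := by
  have := df_bound e x y hx hy
  calc |(1 - e^2) * (x * y)| = |(e^2 - 1) * (x * y)| := by
        rw [show (1 - e^2) * (x*y) = -((e^2-1)*(x*y)) by ring, abs_neg]
    _ ≤ (1 + |e|)^2 := this

lemma key (θ₀ : ℝ) (n : Bool) (v : ℝ × ℝ) (hv : v = (1,0) ∨ v = (0,1)) :
    ∃ F DF : ℝ → ℝ,
      (∀ t, |F t| ≤ (1 + |π / (2*θ₀)|)^2) ∧ (∀ t, |DF t| ≤ (1 + |π / (2*θ₀)|)^2) ∧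
      (∀ z : ℝ × ℝ, 0 < z.2 →
        pdv (fun y => if n then (PhiMap θ₀ y).1 else (PhiMap θ₀ y).2) v z = F (A z)) ∧
      (∀ z : ℝ × ℝ, 0 < z.2 →
        HasFDerivAt (fun y => F (A y))
          ((DF (A z)) • lin (-z.2 / (z.1^2 + z.2^2)) (z.1 / (z.1^2 + z.2^2))) z) := by
  set c := π / (2*θ₀) with hc
  have habs : ∀ t : ℝ, |Real.cos t| ≤ 1 := fun t => Real.abs_cos_le_one t
  have habs' : ∀ t : ℝ, |Real.sin t| ≤ 1 := fun t => Real.abs_sin_le_one t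
  have hone := one_add_le_sq c
  cases n
  · -- second component
    rcases hv with rfl | rfl
    · refine ⟨fun t => Real.cos t * Real.sin (c*t) - c * (Real.sin t * Real.cos (c*t)),
        fun t => (c^2 - 1) * (Real.sin t * Real.sin (c*t)), ?_, ?_, ?_, ?_⟩
      · intro t; exact le_trans (abs_comb2 c _ _ _ _ (habs t) (habs' _) (habs' t) (habs _)) hone
      · intro t; exact df_bound c _ _ (habs' t) (habs' _)
      · intro z hz
        have hF := hasFDerivAt_Phi2 c hz
        simp only [pdv, if_false, Bool.false_eq_true]
        rw [show (fun y => (PhiMap θ₀ y).2) = (fun w => rho w * Real.sin (c * A w)) from rfl,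
          hF.fderiv]
        simp
      · intro z hz
        exact (hasDerivAt_f3 c (A z)).comp_hasFDerivAt z (hasFDerivAt_A hz)
    · refine ⟨fun t => Real.sin t * Real.sin (c*t) + c * (Real.cos t * Real.cos (c*t)),
        fun t => (1 - c^2) * (Real.cos t * Real.sin (c*t)), ?_, ?_, ?_, ?_⟩
      · intro t; exact le_trans (abs_comb1 c _ _ _ _ (habs' t) (habs' _) (habs t) (habs _)) hone
      · intro t; exact df_bound' c _ _ (habs t) (habs' _)
      · intro z hz
        have hF := hasFDerivAt_Phi2 c hz
        simp only [pdv, if_false, Bool.false_eq_true]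
        rw [show (fun y => (PhiMap θ₀ y).2) = (fun w => rho w * Real.sin (c * A w)) from rfl,
          hF.fderiv]
        simp
      · intro z hz
        exact (hasDerivAt_f4 c (A z)).comp_hasFDerivAt z (hasFDerivAt_A hz)
  · -- first component
    rcases hv with rfl | rfl
    · refine ⟨fun t => Real.cos t * Real.cos (c*t) + c * (Real.sin t * Real.sin (c*t)),
        fun t => (c^2 - 1) * (Real.sin t * Real.cos (c*t)), ?_, ?_, ?_, ?_⟩
      · intro t; exact le_trans (abs_comb1 c _ _ _ _ (habs t) (habs _) (habs' t) (habs' _)) hone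
      · intro t; exact df_bound c _ _ (habs' t) (habs _)
      · intro z hz
        have hF := hasFDerivAt_Phi1 c hz
        simp only [pdv, if_true]
        rw [show (fun y => (PhiMap θ₀ y).1) = (fun w => rho w * Real.cos (c * A w)) from rfl,
          hF.fderiv]
        simp
      · intro z hz
        exact (hasDerivAt_f1 c (A z)).comp_hasFDerivAt z (hasFDerivAt_A hz)
    · refine ⟨fun t => Real.sin t * Real.cos (c*t) - c * (Real.cos t * Real.sin (c*t)),
        fun t => (1 - c^2) * (Real.cos t * Real.cos (c*t)), ?_, ?_, ?_, ?_⟩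
      · intro t; exact le_trans (abs_comb2 c _ _ _ _ (habs' t) (habs _) (habs t) (habs' _)) hone
      · intro t; exact df_bound' c _ _ (habs t) (habs _)
      · intro z hz
        have hF := hasFDerivAt_Phi1 c hz
        simp only [pdv, if_true]
        rw [show (fun y => (PhiMap θ₀ y).1) = (fun w => rho w * Real.cos (c * A w)) from rfl,
          hF.fderiv]
        simp
      · intro z hz
        exact (hasDerivAt_f2 c (A z)).comp_hasFDerivAt z (hasFDerivAt_A hz)

end Maps

end WedgeAux

/-- The map `Φ` is a `C^∞`-diffeomorphism from the wedge `G` of opening angle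
`θ₀ ∈ (0,π)` onto the quarter plane `(0,∞)²`, with `det ∇Φ ≡ π/(2θ₀)`; moreover the
first derivatives of `Φ` are bounded on `G` and `ρ·|∂_j∂_k Φ_n|` is bounded on `G`. -/
theorem wedge_to_quarterplane_diffeomorphism (θ₀ : ℝ) (hθ : θ₀ ∈ Ioo 0 π) :
    Set.BijOn (PhiMap θ₀) (Wedge θ₀) (Ioi (0:ℝ) ×ˢ Ioi (0:ℝ)) ∧
    ContDiffOn ℝ (⊤ : ℕ∞) (PhiMap θ₀) (Wedge θ₀) ∧
    (∃ Φinv : ℝ × ℝ → ℝ × ℝ, ContDiffOn ℝ (⊤ : ℕ∞) Φinv (Ioi (0:ℝ) ×ˢ Ioi (0:ℝ)) ∧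
      (∀ z ∈ Wedge θ₀, Φinv (PhiMap θ₀ z) = z) ∧
      (∀ w ∈ (Ioi (0:ℝ) ×ˢ Ioi (0:ℝ) : Set (ℝ × ℝ)), PhiMap θ₀ (Φinv w) = w)) ∧
    (∀ z ∈ Wedge θ₀,
      pdv (fun w => (PhiMap θ₀ w).1) (1, 0) z * pdv (fun w => (PhiMap θ₀ w).2) (0, 1) z
        - pdv (fun w => (PhiMap θ₀ w).1) (0, 1) z * pdv (fun w => (PhiMap θ₀ w).2) (1, 0) z
        = π / (2 * θ₀)) ∧
    (∃ M : ℝ, 0 < M ∧ ∀ z ∈ Wedge θ₀, ∀ v w : ℝ × ℝ,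
      (v = (1, 0) ∨ v = (0, 1)) → (w = (1, 0) ∨ w = (0, 1)) →
      ∀ n : Bool,
        let Φn : ℝ × ℝ → ℝ := fun y => if n then (PhiMap θ₀ y).1 else (PhiMap θ₀ y).2
        |pdv Φn v z| ≤ M ∧ rho z * |pdv (pdv Φn v) w z| ≤ M) := by
  obtain ⟨hθ0, hθπ⟩ := hθ
  have hπ := Real.pi_pos
  set c : ℝ := π / (2 * θ₀) with hc
  have hc_pos : 0 < c := by positivity
  set θ₀' : ℝ := π^2 / (4 * θ₀) with hθ₀'
  have hc' : π / (2 * θ₀') = 2 * θ₀ / π := by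
    rw [hθ₀']; field_simp; ring
  -- wedge lies in upper half plane
  have wedge_sub : ∀ z ∈ Wedge θ₀, (0:ℝ) < z.2 := by
    rintro z ⟨r, θ, hr, h1, h2, rfl⟩
    exact mul_pos hr (Real.sin_pos_of_pos_of_lt_pi h1 (h2.trans hθπ))
  have hQmem : ∀ w : ℝ × ℝ, w ∈ (Ioi (0:ℝ) ×ˢ Ioi (0:ℝ) : Set (ℝ × ℝ)) ↔ 0 < w.1 ∧ 0 < w.2 := by
    intro w; simp [Set.mem_prod]
  -- forward maps to quarter plane
  have hmapsTo : Set.MapsTo (PhiMap θ₀) (Wedge θ₀) (Ioi (0:ℝ) ×ˢ Ioi (0:ℝ)) := by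
    rintro z ⟨r, θ, hr, h1, h2, rfl⟩
    rw [WedgeAux.phi_polar θ₀ r θ hr h1.le (h2.trans hθπ).le, hQmem]
    have hpos : 0 < c * θ := mul_pos hc_pos h1
    have hlt : c * θ < π / 2 := by
      have := (mul_lt_mul_of_pos_left h2 hc_pos)
      have hcθ₀ : c * θ₀ = π / 2 := by rw [hc]; field_simp
      rw [hcθ₀] at this; exact this
    constructor
    · exact mul_pos hr (Real.cos_pos_of_mem_Ioo ⟨by linarith, hlt⟩)
    · exact mul_pos hr (Real.sin_pos_of_pos_of_lt_pi hpos (by linarith))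
  -- inverse maps quarter plane to wedge
  have hmapsTo' : Set.MapsTo (PhiMap θ₀') (Ioi (0:ℝ) ×ˢ Ioi (0:ℝ)) (Wedge θ₀) := by
    intro w hw
    rw [hQmem] at hw
    obtain ⟨hwe, hA0, hA2⟩ := WedgeAux.polar_of_quarter hw.1 hw.2
    have hr := WedgeAux.rho_pos hw.2
    have hpp := WedgeAux.phi_polar θ₀' (rho w) (WedgeAux.A w) hr hA0.le (by linarith)
    rw [← hwe] at hpp
    rw [hpp]
    refine ⟨rho w, π / (2*θ₀') * WedgeAux.A w, hr, ?_, ?_, rfl⟩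
    · rw [hc']; positivity
    · rw [hc']
      calc 2 * θ₀ / π * WedgeAux.A w < 2 * θ₀ / π * (π/2) :=
            mul_lt_mul_of_pos_left hA2 (by positivity)
        _ = θ₀ := by field_simp
  -- left inverse
  have hleft : ∀ z ∈ Wedge θ₀, PhiMap θ₀' (PhiMap θ₀ z) = z := by
    rintro z ⟨r, θ, hr, h1, h2, rfl⟩
    have hθle : θ ≤ π := (h2.trans hθπ).le
    rw [WedgeAux.phi_polar θ₀ r θ hr h1.le hθle]
    have hpos : 0 ≤ π / (2*θ₀) * θ := by positivity
    have hle : π / (2*θ₀) * θ ≤ π := by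
      have hlt : c * θ < π / 2 := by
        have := (mul_lt_mul_of_pos_left h2 hc_pos)
        have hcθ₀ : c * θ₀ = π / 2 := by rw [hc]; field_simp
        rw [hcθ₀] at this; exact this
      rw [← hc]; linarith
    rw [WedgeAux.phi_polar θ₀' r (π / (2*θ₀) * θ) hr hpos hle]
    have : π / (2*θ₀') * (π / (2*θ₀) * θ) = θ := by
      rw [hc']; field_simp
    rw [this]
  -- right inverse
  have hright : ∀ w ∈ (Ioi (0:ℝ) ×ˢ Ioi (0:ℝ) : Set (ℝ × ℝ)), PhiMap θ₀ (PhiMap θ₀' w) = w := by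
    intro w hw
    rw [hQmem] at hw
    obtain ⟨hwe, hA0, hA2⟩ := WedgeAux.polar_of_quarter hw.1 hw.2
    have hr := WedgeAux.rho_pos hw.2
    conv_lhs => rw [hwe]
    rw [WedgeAux.phi_polar θ₀' (rho w) (WedgeAux.A w) hr hA0.le (by linarith)]
    have hang0 : 0 ≤ π / (2*θ₀') * WedgeAux.A w := by rw [hc']; positivity
    have hanglt : π / (2*θ₀') * WedgeAux.A w ≤ π := by
      rw [hc']
      have : 2 * θ₀ / π * WedgeAux.A w < 2 * θ₀ / π * (π/2) :=
        mul_lt_mul_of_pos_left hA2 (by positivity)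
      have h3 : 2 * θ₀ / π * (π/2) = θ₀ := by field_simp
      rw [h3] at this; linarith
    rw [WedgeAux.phi_polar θ₀ (rho w) (π / (2*θ₀') * WedgeAux.A w) hr hang0 hanglt]
    have : π / (2*θ₀) * (π / (2*θ₀') * WedgeAux.A w) = WedgeAux.A w := by
      rw [hc']; field_simp
    rw [this, ← hwe]
  refine ⟨Set.InvOn.bijOn ⟨fun z hz => hleft z hz, fun w hw => hright w hw⟩ hmapsTo hmapsTo', ?_, ?_, ?_, ?_⟩
  · exact (WedgeAux.contDiffOn_phi θ₀).mono (fun z hz => wedge_sub z hz)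
  · exact ⟨PhiMap θ₀', (WedgeAux.contDiffOn_phi θ₀').mono
      (fun w hw => ((hQmem w).1 hw).2), hleft, hright⟩
  · -- Jacobian
    intro z hz
    have h2 : (0:ℝ) < z.2 := wedge_sub z hz
    have hF1 := (WedgeAux.hasFDerivAt_Phi1 c h2).fderiv
    have hF2 := (WedgeAux.hasFDerivAt_Phi2 c h2).fderiv
    have e1 : (fun w => (PhiMap θ₀ w).1) = (fun w => rho w * Real.cos (c * WedgeAux.A w)) := rfl
    have e2 : (fun w => (PhiMap θ₀ w).2) = (fun w => rho w * Real.sin (c * WedgeAux.A w)) := rfl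
    simp only [pdv, e1, e2, hF1, hF2, WedgeAux.lin_apply]
    have hXY := Real.sin_sq_add_cos_sq (WedgeAux.A z)
    have hCS := Real.sin_sq_add_cos_sq (c * WedgeAux.A z)
    linear_combination (c * (Real.sin (c * WedgeAux.A z)^2 + Real.cos (c * WedgeAux.A z)^2)) * hXY + c * hCS
  · -- bounds
    refine ⟨(1 + |c|)^2, by positivity, ?_⟩
    intro z hz v w hv hw n
    intro Φn
    have h2 : (0:ℝ) < z.2 := wedge_sub z hz
    have hr := WedgeAux.rho_pos h2
    obtain ⟨F, DF, hFb, hDFb, hpdv, hder⟩ := WedgeAux.key θ₀ n v hv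
    constructor
    · rw [show Φn = (fun y => if n then (PhiMap θ₀ y).1 else (PhiMap θ₀ y).2) from rfl,
        hpdv z h2]
      exact hFb (WedgeAux.A z)
    · have hUopen : IsOpen {y : ℝ × ℝ | 0 < y.2} := isOpen_lt continuous_const continuous_snd
      have heq : pdv Φn v =ᶠ[nhds z] (fun y => F (WedgeAux.A y)) :=
        Filter.eventuallyEq_of_mem (hUopen.mem_nhds h2) (fun y hy => hpdv y hy)
      have hval : pdv (pdv Φn v) w z
          = DF (WedgeAux.A z) * (WedgeAux.lin (-z.2 / (z.1^2 + z.2^2)) (z.1 / (z.1^2 + z.2^2)) w) := by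
        show fderiv ℝ (pdv Φn v) z w = _
        rw [heq.fderiv_eq, (hder z h2).fderiv]
        simp
      rw [hval]
      have hlinb : |WedgeAux.lin (-z.2 / (z.1^2 + z.2^2)) (z.1 / (z.1^2 + z.2^2)) w| ≤ 1 / rho z := by
        have hs := WedgeAux.s_pos h2
        have hq := WedgeAux.rho_sq h2
        rcases hw with rfl | rfl
        · simp only [WedgeAux.lin_apply]
          rw [show -z.2 / (z.1^2 + z.2^2) * (1:ℝ) + z.1 / (z.1^2 + z.2^2) * (0:ℝ)
              = -z.2 / (z.1^2+z.2^2) by ring, abs_div, abs_neg, abs_of_pos h2,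
            abs_of_pos hs, div_le_div_iff₀ hs hr]
          nlinarith [WedgeAux.abs_snd_le h2, abs_of_pos h2]
        · simp only [WedgeAux.lin_apply]
          rw [show -z.2 / (z.1^2 + z.2^2) * (0:ℝ) + z.1 / (z.1^2 + z.2^2) * (1:ℝ)
              = z.1 / (z.1^2+z.2^2) by ring, abs_div, abs_of_pos hs, div_le_div_iff₀ hs hr]
          nlinarith [(WedgeAux.abs_fst_lt h2).le, abs_nonneg z.1, hr]
      rw [abs_mul]
      calc rho z * (|DF (WedgeAux.A z)| * |WedgeAux.lin _ _ w|)
          ≤ rho z * ((1 + |c|)^2 * (1 / rho z)) := by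
            refine mul_le_mul_of_nonneg_left ?_ hr.le
            exact mul_le_mul (by rw [hc]; exact hDFb _) hlinb (abs_nonneg _) (by positivity)
        _ = (1 + |c|)^2 := by field_simp

end
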